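/- Let c and d be codewords of the Varshamov–Tenengolts code VT(n). If d can be obtained from c by a single insertion followed by a single deletion (i.e., there exists a binary string w of length n+1 with w ∈ D₊₁(c) and d ∈ D₋₁(w)), then d = c. -/

import Mathlib

/-- The checksum of a binary string `c = (c_1, …, c_n)` is `Σ_{i=1}^n i·c_i`. -/
def checksum (c : List Bool) : ℕ :=
  ∑ i ∈ Finset.range c.length, (i + 1) * (c.getD i false).toNat

/-- The Varshamov–Tenengolts code `VT(n)`. -/
def VT (n : ℕ) : Set (List Bool) :=
  {c | c.length = n ∧ (n + 1) ∣ checksum c}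

/-- `del1 x`: the set of strings obtainable from `x` by deleting one bit. -/
def del1 (x : List Bool) : Set (List Bool) :=
  {w | ∃ p < x.length, w = x.take p ++ x.drop (p + 1)}

/-- `ins1 x`: the set of strings obtainable from `x` by inserting one bit. -/
def ins1 (x : List Bool) : Set (List Bool) :=
  {y | ∃ p ≤ x.length, ∃ b : Bool, y = x.take p ++ b :: x.drop p}

/-!
Both `c` and `d` are obtained from the same string `w` of length `n + 1` by deleting one bit,
at (0-indexed) positions `p < q` say. Writing `w = u ++ a :: m ++ b :: v` with `|u| = p`, the
two deletions `u ++ m ++ b :: v` and `u ++ a :: m ++ v` differ only in the block `m ++ [b]`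
versus `a :: m`, and their checksums differ by `q·b - (p+1)·a - #{ones in m}`, an integer of
absolute value at most `q ≤ n`. Divisibility by `n + 1` forces this difference to vanish, which
happens only when `m` and `b` are copies of `a`, i.e. when `m ++ [b] = a :: m`.
-/

namespace List

variable {α : Type*}

lemma exists_eq_append_cons_append_cons (w : List α) {p q : ℕ} (hpq : p < q)
    (hq : q < w.length) :
    ∃ u a m b v, w = u ++ a :: m ++ b :: v ∧ u.length = p ∧ u.length + m.length + 1 = q := by
  refine ⟨w.take p, w[p], (w.drop (p + 1)).take (q - p - 1), w[q], w.drop (q + 1), ?_, ?_, ?_⟩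
  · conv_lhs => rw [← w.take_append_drop p, w.drop_eq_getElem_cons (by omega),
      ← (w.drop (p + 1)).take_append_drop (q - p - 1), drop_drop,
      w.drop_eq_getElem_cons (show p + 1 + (q - p - 1) < w.length by omega)]
    simp [show p + 1 + (q - p - 1) = q by omega]
  · simp only [length_take]; omega
  · simp only [length_take, length_drop]; omega

lemma eraseIdx_length_append_cons (u m v : List α) (a b : α) :
    (u ++ a :: m ++ b :: v).eraseIdx u.length = u ++ m ++ b :: v := by
  simp [eraseIdx_append_of_length_le]

lemma eraseIdx_length_append_cons_append_cons (u m v : List α) (a b : α) :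
    (u ++ a :: m ++ b :: v).eraseIdx (u.length + m.length + 1) = u ++ a :: m ++ v := by
  rw [append_assoc, eraseIdx_append_of_length_le (by omega),
    show u.length + m.length + 1 - u.length = m.length + 1 by omega, cons_append,
    eraseIdx_cons_succ, eraseIdx_append_of_length_le le_rfl]
  simp

lemma append_singleton_eq_cons_of_forall_eq {m : List α} {a : α} (h : ∀ x ∈ m, x = a) :
    m ++ [a] = a :: m := by
  rw [eq_replicate_of_mem h, ← replicate_succ', replicate_succ]

end List

lemma sum_range_getD_toNat_eq_count (t : List Bool) :
    ∑ i ∈ Finset.range t.length, (t.getD i false).toNat = t.count true := by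
  induction t with
  | nil => simp
  | cons b t ih =>
    rw [List.length_cons, Finset.sum_range_succ', List.count_cons]
    simp only [List.getD_cons_succ, List.getD_cons_zero, ih]
    cases b <;> rfl

lemma checksum_cons (b : Bool) (t : List Bool) :
    checksum (b :: t) = b.toNat + t.count true + checksum t := by
  rw [checksum, List.length_cons, Finset.sum_range_succ', ← sum_range_getD_toNat_eq_count, checksum,
    add_comm, add_assoc, ← Finset.sum_add_distrib]
  simp only [List.getD_cons_succ, List.getD_cons_zero]
  congr 1
  · ring
  · exact Finset.sum_congr rfl fun i _ => by ring

lemma checksum_append (x y : List Bool) :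
    checksum (x ++ y) = checksum x + x.length * y.count true + checksum y := by
  induction x with
  | nil => simp [checksum]
  | cons a x ih =>
    simp only [List.cons_append, checksum_cons, ih, List.count_append, List.length_cons]
    ring

lemma checksum_sub_checksum_of_shift (u m v : List Bool) (a b : Bool) :
    (checksum (u ++ m ++ b :: v) : ℤ) - checksum (u ++ a :: m ++ v)
      = (u.length + m.length + 1) * b.toNat - (u.length + 1) * a.toNat - m.count true := by
  cases a <;> cases b <;>
    simp only [checksum_append, checksum_cons, List.count_cons, List.length_cons,
      List.length_append, beq_true, Bool.false_eq_true, ↓reduceIte, Bool.toNat_true,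
      Bool.toNat_false] <;>
    push_cast <;> ring

lemma append_singleton_eq_cons_of_checksum_modEq {N : ℕ} (u m v : List Bool) (a b : Bool)
    (hN : u.length + m.length + 1 < N)
    (h : checksum (u ++ m ++ b :: v) ≡ checksum (u ++ a :: m ++ v) [MOD N]) :
    m ++ [b] = a :: m := by
  have hdvd := Nat.modEq_iff_dvd.mp h.symm
  rw [checksum_sub_checksum_of_shift] at hdvd
  have hcount := m.count_le_length (a := true)
  cases a <;> cases b <;>
    simp only [Bool.toNat_true, Bool.toNat_false, Nat.cast_one, Nat.cast_zero] at hdvd ⊢ <;>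
    have hzero := Int.eq_zero_of_abs_lt_dvd hdvd (by rw [abs_lt]; omega)
  · exact List.append_singleton_eq_cons_of_forall_eq fun x hx => by
      cases x
      · rfl
      · exact absurd hx (List.count_eq_zero.mp (by omega))
  · omega
  · omega
  · exact List.append_singleton_eq_cons_of_forall_eq fun x hx =>
      (List.count_eq_length.mp (by omega) x hx).symm

lemma eraseIdx_eq_of_checksum_modEq (w : List Bool) {p q : ℕ} (hp : p < w.length)
    (hq : q < w.length)
    (h : checksum (w.eraseIdx p) ≡ checksum (w.eraseIdx q) [MOD w.length]) :
    w.eraseIdx p = w.eraseIdx q := by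
  wlog hpq : p < q generalizing p q
  · rcases (not_lt.mp hpq).eq_or_lt with rfl | hqp
    · rfl
    · exact (this hq hp h.symm hqp).symm
  obtain ⟨u, a, m, b, v, rfl, rfl, rfl⟩ := w.exists_eq_append_cons_append_cons hpq hq
  rw [List.eraseIdx_length_append_cons, List.eraseIdx_length_append_cons_append_cons] at h ⊢
  have hshift := append_singleton_eq_cons_of_checksum_modEq u m v a b
    (by simp only [List.length_append, List.length_cons]; omega) h
  simp [← hshift]

/-- If a VT(n) codeword `d` is obtained from a VT(n) codeword `c` by a single
insertion followed by a single deletion, then `d = c`. -/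
theorem vt_ins_then_del (n : ℕ) (c d : List Bool)
    (hc : c ∈ VT n) (hd : d ∈ VT n)
    (w : List Bool) (hwc : w ∈ ins1 c) (hdw : d ∈ del1 w) :
    d = c := by
  obtain ⟨hcl, hcd⟩ := hc
  obtain ⟨p, hp, b, rfl⟩ := hwc
  obtain ⟨q, hq, rfl⟩ := hdw
  set w := c.take p ++ b :: c.drop p
  have hcw : w.eraseIdx p = c := by simp [w, List.eraseIdx_append_of_length_le, hp]
  have hw : w.length = n + 1 := by
    simp only [w, List.length_append, List.length_take, List.length_cons, List.length_drop]
    omega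
  rw [← List.eraseIdx_eq_take_drop_succ] at hd ⊢
  rw [← hcw] at hcd ⊢
  refine eraseIdx_eq_of_checksum_modEq w hq (by omega) ?_
  rw [hw]
  exact (Nat.modEq_zero_iff_dvd.mpr hd.2).trans (Nat.modEq_zero_iff_dvd.mpr hcd).symm
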